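/- arXiv:2201.12674 — 2 statements merged into one kernel-verified Lean document; each statement's English description precedes it below -/
import Mathlib

section
/- (Injectivity of rewiring with shortest-path positional encoding.) Let G₁ and G₂ be simple graphs on the same finite vertex set V and let r ≥ 1. Suppose the r-hop rewired graphs (G₁)'_r and (G₂)'_r are equal, and for every edge {u,v} of this common rewired graph the shortest-path encodings agree, i.e., dist_{G₁}(u,v) = dist_{G₂}(u,v). Then G₁ = G₂. -/
open SimpleGraph

/-- The `r`-hop rewired graph `G'_r`: distinct vertices `u`, `v` are adjacent iff
they are connected in `G` and `0 < dist_G(u,v) ≤ r`. -/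
def rewire {V : Type*} (G : SimpleGraph V) (r : ℕ) : SimpleGraph V where
  Adj u v := u ≠ v ∧ G.Reachable u v ∧ 0 < G.dist u v ∧ G.dist u v ≤ r
  symm := by
    constructor
    rintro u v ⟨h1, h2, h3, h4⟩
    exact ⟨h1.symm, h2.symm, by rwa [SimpleGraph.dist_comm], by rwa [SimpleGraph.dist_comm]⟩
  loopless := by
    constructor
    rintro u ⟨h1, -⟩
    exact h1 rfl

theorem adj_iff_rewire_adj_and_dist_eq_one {V : Type*} {G : SimpleGraph V} {r : ℕ} (hr : 1 ≤ r)
    {u v : V} : G.Adj u v ↔ (rewire G r).Adj u v ∧ G.dist u v = 1 := by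
  refine ⟨fun h => ?_, fun h => dist_eq_one_iff_adj.mp h.2⟩
  have hd : G.dist u v = 1 := dist_eq_one_iff_adj.mpr h
  exact ⟨⟨h.ne, h.reachable, by omega, by omega⟩, hd⟩

theorem stmt_3_general {V : Type*} (G₁ G₂ : SimpleGraph V) (r : ℕ) (hr : 1 ≤ r)
    (hrew : rewire G₁ r = rewire G₂ r)
    (henc : ∀ u v : V, (rewire G₁ r).Adj u v → G₁.dist u v = G₂.dist u v) :
    G₁ = G₂ := by
  ext u v
  rw [adj_iff_rewire_adj_and_dist_eq_one (G := G₁) hr,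
    adj_iff_rewire_adj_and_dist_eq_one (G := G₂) hr, ← hrew]
  exact and_congr_right fun h => by rw [henc u v h]

theorem stmt_3 {V : Type*} [Fintype V] (G₁ G₂ : SimpleGraph V) (r : ℕ) (hr : 1 ≤ r)
    (hrew : rewire G₁ r = rewire G₂ r)
    (henc : ∀ u v : V, (rewire G₁ r).Adj u v → G₁.dist u v = G₂.dist u v) :
    G₁ = G₂ :=
  stmt_3_general G₁ G₂ r hr hrew henc
end

section
/- (Alleviation of under-reaching by r-hop rewiring.) Let G be a simple graph on a finite vertex set V, let r ≥ 1, and let u, v be vertices connected in G. Then the shortest-path distance between u and v in the r-hop rewired graph G'_r equals ⌈dist_G(u,v) / r⌉; in particular, dist_{G'_r}(u,v) ≤ ⌈dist_G(u,v) / r⌉ and dist_G(u,v) ≤ r · dist_{G'_r}(u,v). -/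
/-!
Cutting a shortest `G`-path of length `d` into consecutive pieces of length at most `r` turns
it into a walk of length `⌈d / r⌉` in the rewired graph, since the endpoints of each piece are
equal or adjacent there. Conversely every rewired edge unfolds into a `G`-walk of length at most
`r`, so `d ≤ r · dist'`, which is the matching lower bound `⌈d / r⌉ ≤ dist'`.
-/

open SimpleGraph

lemma Nat.ceilDiv_eq_sub_ceilDiv_add_one {a b : ℕ} (ha : 0 < a) (hb : 0 < b) :
    b ⌈/⌉ a = (b - a) ⌈/⌉ a + 1 := by
  rw [ceilDiv_eq_add_pred_div, ceilDiv_eq_add_pred_div, ← Nat.add_div_right _ ha]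
  rcases le_or_gt a b with hab | hab
  · congr 1
    omega
  · rw [Nat.sub_eq_zero_of_le hab.le, Nat.div_eq_of_lt_le (k := 1) (by omega) (by omega),
      Nat.div_eq_of_lt_le (k := 1) (by omega) (by omega)]

section Rewire

variable {V : Type*} {G : SimpleGraph V} {r : ℕ} {u v : V}

lemma rewire_adj_of_length_le (p : G.Walk u v) (hp : p.length ≤ r) (huv : u ≠ v) :
    (rewire G r).Adj u v :=
  ⟨huv, p.reachable, p.reachable.pos_dist_of_ne huv, (dist_le p).trans hp⟩

lemma exists_rewire_walk_length_le_one (p : G.Walk u v) (hp : p.length ≤ r) :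
    ∃ q : (rewire G r).Walk u v, q.length ≤ 1 := by
  by_cases huv : u = v
  · subst huv
    exact ⟨.nil, zero_le_one⟩
  · exact ⟨(rewire_adj_of_length_le p hp huv).toWalk, le_rfl⟩

lemma exists_rewire_walk_length_le_ceilDiv (hr : 0 < r) (p : G.Walk u v) :
    ∃ q : (rewire G r).Walk u v, q.length ≤ p.length ⌈/⌉ r := by
  induction hn : p.length using Nat.strong_induction_on generalizing u with
  | _ n ih =>
    rcases Nat.eq_zero_or_pos n with rfl | hn_pos
    · obtain rfl := p.eq_of_length_eq_zero hn
      exact ⟨.nil, Nat.zero_le _⟩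
    obtain ⟨q₁, hq₁⟩ := exists_rewire_walk_length_le_one (p.take r)
      ((p.take_length r).trans_le inf_le_left)
    obtain ⟨q₂, hq₂⟩ := ih (n - r) (by omega) (p.drop r) (by rw [p.drop_length, hn])
    refine ⟨q₁.append q₂, ?_⟩
    rw [Walk.length_append, Nat.ceilDiv_eq_sub_ceilDiv_add_one hr hn_pos]
    omega

lemma exists_walk_length_le_mul_of_rewire_walk (q : (rewire G r).Walk u v) :
    ∃ p : G.Walk u v, p.length ≤ r * q.length := by
  induction q with
  | nil => exact ⟨.nil, Nat.zero_le _⟩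
  | cons h _ ih =>
    obtain ⟨p, hp⟩ := ih
    obtain ⟨-, hreach, -, hdist⟩ := id h
    obtain ⟨p₀, hp₀⟩ := hreach.exists_walk_length_eq_dist
    refine ⟨p₀.append p, ?_⟩
    rw [Walk.length_append, Walk.length_cons, hp₀, mul_add_one]
    omega

end Rewire

theorem stmt_7_general {V : Type*} (G : SimpleGraph V) (r : ℕ) (hr : 1 ≤ r)
    (u v : V) (hconn : G.Reachable u v) :
    (rewire G r).dist u v = G.dist u v ⌈/⌉ r ∧
    (rewire G r).dist u v ≤ G.dist u v ⌈/⌉ r ∧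
    G.dist u v ≤ r * (rewire G r).dist u v := by
  obtain ⟨p, hp⟩ := hconn.exists_walk_length_eq_dist
  obtain ⟨q, hq⟩ := exists_rewire_walk_length_le_ceilDiv hr p
  have hub : (rewire G r).dist u v ≤ G.dist u v ⌈/⌉ r := hp ▸ (dist_le q).trans hq
  obtain ⟨q', hq'⟩ := q.reachable.exists_walk_length_eq_dist
  obtain ⟨p', hp'⟩ := exists_walk_length_le_mul_of_rewire_walk q'
  have hlb : G.dist u v ≤ r * (rewire G r).dist u v := hq' ▸ (dist_le p').trans hp'
  exact ⟨le_antisymm hub ((ceilDiv_le_iff_le_mul hr).2 hlb), hub, hlb⟩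

theorem stmt_7 {V : Type*} [Fintype V] (G : SimpleGraph V) (r : ℕ) (hr : 1 ≤ r)
    (u v : V) (hconn : G.Reachable u v) :
    (rewire G r).dist u v = G.dist u v ⌈/⌉ r ∧
    (rewire G r).dist u v ≤ G.dist u v ⌈/⌉ r ∧
    G.dist u v ≤ r * (rewire G r).dist u v :=
  stmt_7_general G r hr u v hconn
end
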